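/- arXiv:1311.6605 — 4 statements merged into one kernel-verified Lean document; each statement's English description precedes it below -/
import Mathlib

section
/- For a transducer T and an automaton A, the language of the automaton T(A) equals the image of L(A) under the relation R_T, i.e., L(T(A)) = {v | ∃u ∈ L(A), (u,v) ∈ R_T}. -/
structure FA (Q σ : Type) where
  E : Q → σ → Q → Prop
  I : Set Q
  F : Set Q

inductive FA.path {Q σ : Type} (A : FA Q σ) : Q → List σ → Q → Prop
  | nil (q : Q) : A.path q [] q
  | cons {p q r : Q} {a : σ} {w : List σ} :
      A.E p a q → A.path q w r → A.path p (a :: w) r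

/-- The language of an automaton: words labeling a path from an initial to a final state. -/
def FA.lang {Q σ : Type} (A : FA Q σ) : Set (List σ) :=
  {w | ∃ i f, i ∈ A.I ∧ f ∈ A.F ∧ A.path i w f}

/-- The relation induced by a transducer: pairs of equal-length words whose zip is accepted. -/
def FA.rel {Q σ₁ σ₂ : Type} (T : FA Q (σ₁ × σ₂)) (u : List σ₁) (v : List σ₂) : Prop :=
  u.length = v.length ∧ u.zip v ∈ T.lang

/-- The inverse transducer, swapping the two components of each transition label. -/
def FA.inv {Q σ₁ σ₂ : Type} (T : FA Q (σ₁ × σ₂)) : FA Q (σ₂ × σ₁) where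
  E p ab q := T.E p (ab.2, ab.1) q
  I := T.I
  F := T.F

/-- Application of a transducer to an automaton, the automaton `T(A)`. -/
def FA.app {Q₂ σ₁ σ₂ Q₁ : Type} (T : FA Q₂ (σ₁ × σ₂)) (A : FA Q₁ σ₁) : FA (Q₁ × Q₂) σ₂ where
  E p b q := ∃ a, A.E p.1 a q.1 ∧ T.E p.2 (a, b) q.2
  I := A.I ×ˢ T.I
  F := A.F ×ˢ T.F

/-- Image of a set under a relation. -/
def relImage {α β : Type} (R : α → β → Prop) (L : Set α) : Set β := {v | ∃ u ∈ L, R u v}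

lemma app_path_fwd {Q₁ Q₂ σ₁ σ₂ : Type} (A : FA Q₁ σ₁) (T : FA Q₂ (σ₁ × σ₂))
    {p q : Q₁ × Q₂} {v : List σ₂} (h : (T.app A).path p v q) :
    ∃ u : List σ₁, u.length = v.length ∧ A.path p.1 u q.1 ∧ T.path p.2 (u.zip v) q.2 := by
  induction h with
  | nil q => exact ⟨[], rfl, FA.path.nil _, FA.path.nil _⟩
  | cons e _ ih =>
    obtain ⟨a, hA, hT⟩ := e
    obtain ⟨u, hl, h1, h2⟩ := ih
    exact ⟨a :: u, by simp [hl], FA.path.cons hA h1, FA.path.cons hT h2⟩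

lemma app_path_bwd {Q₁ Q₂ σ₁ σ₂ : Type} (A : FA Q₁ σ₁) (T : FA Q₂ (σ₁ × σ₂)) :
    ∀ (u : List σ₁) (v : List σ₂) {p₁ q₁ : Q₁} {p₂ q₂ : Q₂}, u.length = v.length →
    A.path p₁ u q₁ → T.path p₂ (u.zip v) q₂ → (T.app A).path (p₁, p₂) v (q₁, q₂)
  | [], [], _, _, _, _, _, h1, h2 => by
    cases h1; cases h2; exact FA.path.nil _
  | a :: u, b :: v, _, _, _, _, hl, h1, h2 => by
    cases h1 with
    | cons e1 h1 =>
      cases h2 with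
      | cons e2 h2 =>
        exact FA.path.cons ⟨a, e1, e2⟩ (app_path_bwd A T u v (by simpa using hl) h1 h2)

/-- L(T(A)) = R_T(L(A)). -/
theorem app_lang {Q₁ Q₂ σ₁ σ₂ : Type} (A : FA Q₁ σ₁) (T : FA Q₂ (σ₁ × σ₂)) :
    (T.app A).lang = {v | ∃ u ∈ A.lang, T.rel u v} := by
  ext v
  constructor
  · rintro ⟨⟨i₁, i₂⟩, ⟨f₁, f₂⟩, ⟨hi₁, hi₂⟩, ⟨hf₁, hf₂⟩, hp⟩
    obtain ⟨u, hl, h1, h2⟩ := app_path_fwd A T hp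
    exact ⟨u, ⟨i₁, f₁, hi₁, hf₁, h1⟩, hl, i₂, f₂, hi₂, hf₂, h2⟩
  · rintro ⟨u, ⟨i₁, f₁, hi₁, hf₁, h1⟩, hl, i₂, f₂, hi₂, hf₂, h2⟩
    exact ⟨(i₁, i₂), (f₁, f₂), ⟨hi₁, hi₂⟩, ⟨hf₁, hf₂⟩, app_path_bwd A T u v hl h1 h2⟩
end

section
/- If the FixPoint semi-algorithm returns Safe on input (A, T, B, F), i.e., there is an automaton A' in the iterated sequence A₀ = A, A_{n+1} = C_F(T(A_n)) with L(A_{n+1}) = L(A_n) and L(A_n) ∩ L(B) = ∅ at each step, then R_T*(L(A)) ∩ L(B) = ∅. -/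
/-- correctness of the FixPoint semi-algorithm. L n is the language of the n-th
iterate A_n (A₀ = A, A_{n+1} = C_F(T(A_n))); since L(A_n) ⊆ L(C_F(T(A_n))) via
R_T(L(A_n)) = L(T(A_n)) ⊆ L(C_F(T(A_n))), each step over-approximates one application of R_T.
If the iteration reaches a fixpoint at step n with empty intersection with L(B) at each step,
then R_T*(L(A)) ∩ L(B) = ∅. -/
theorem fixpoint_correct {σ QA QB QT : Type} (A : FA QA σ) (B : FA QB σ) (T : FA QT (σ × σ))
    (hid : ∀ u : List σ, T.rel u u)
    (L : ℕ → Set (List σ)) (h0 : L 0 = A.lang)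
    (hstep : ∀ n, relImage T.rel (L n) ⊆ L (n + 1))
    (n : ℕ) (hfix : L (n + 1) = L n)
    (hsafe : ∀ m ≤ n, L m ∩ B.lang = ∅) :
    relImage (Relation.ReflTransGen T.rel) A.lang ∩ B.lang = ∅ := by
  have hmono : ∀ m, L m ⊆ L (m + 1) := by
    intro m w hw
    exact hstep m ⟨w, hw, hid w⟩
  have h0n : A.lang ⊆ L n := by
    rw [← h0]
    clear hfix hsafe
    induction n with
    | zero => exact fun _ h => h
    | succ k ih => exact fun w hw => hmono k (ih hw)
  have hclosed : ∀ v w, Relation.ReflTransGen T.rel v w → v ∈ L n → w ∈ L n := by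
    intro v w h
    induction h with
    | refl => exact id
    | tail _ hvw ih => exact fun hv => hfix ▸ hstep n ⟨_, ih hv, hvw⟩
  ext w
  simp only [Set.mem_inter_iff, Set.mem_empty_iff_false, iff_false, not_and]
  rintro ⟨u, hu, huw⟩ hw
  have : w ∈ L n ∩ B.lang := ⟨hclosed u w huw (h0n hu), hw⟩
  rw [hsafe n le_rfl] at this
  exact this
end

section
/- Let L be a language with L(A) ⊆ L, R_T(L) ⊆ L, and L ∩ L(B) = ∅, where R_T contains the identity. Then R_T*(L(A)) ∩ L(B) = ∅. -/
/-- if L(A) ⊆ L, R_T(L) ⊆ L and L ∩ L(B) = ∅, with R_T containing the identity,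
then R_T*(L(A)) ∩ L(B) = ∅. -/
theorem invariant_lemma {σ QA QB QT : Type} (A : FA QA σ) (B : FA QB σ) (T : FA QT (σ × σ))
    (hid : ∀ u : List σ, T.rel u u)
    (L : Set (List σ)) (hA : A.lang ⊆ L) (hcl : relImage T.rel L ⊆ L)
    (hdisj : L ∩ B.lang = ∅) :
    relImage (Relation.ReflTransGen T.rel) A.lang ∩ B.lang = ∅ := by
  have key : relImage (Relation.ReflTransGen T.rel) A.lang ⊆ L := by
    rintro v ⟨u, hu, hrel⟩
    induction hrel with
    | refl => exact hA hu
    | tail _ h ih => exact hcl ⟨_, ih, h⟩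
  apply Set.eq_empty_of_subset_empty
  rw [← hdisj]
  exact Set.inter_subset_inter_left _ key
end

section
/- If the while loop of FixPointT terminates at step k with L(T_C^{k+1}(A)) = L(T_C^k(A)) and L(T_C^k(A)) ∩ L(B) = ∅, and moreover L(A) ⊆ L(T_C^k(A)) and R_T(L(T_C^k(A))) ⊆ L(T_C^{k+1}(A)), then R_T*(L(A)) ∩ L(B) = ∅. -/
/-- correctness of FixPointT. Lk = L(T_C^k(A)) and Lk1 = L(T_C^{k+1}(A)):
if L(A) ⊆ Lk, R_T(Lk) ⊆ Lk1, Lk1 = Lk and Lk ∩ L(B) = ∅, then R_T*(L(A)) ∩ L(B) = ∅. -/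
theorem fixpointT_correct {σ QA QB QT : Type} (A : FA QA σ) (B : FA QB σ) (T : FA QT (σ × σ))
    (hid : ∀ u : List σ, T.rel u u)
    (Lk Lk1 : Set (List σ))
    (hA : A.lang ⊆ Lk) (happly : relImage T.rel Lk ⊆ Lk1) (hfix : Lk1 = Lk)
    (hdisj : Lk ∩ B.lang = ∅) :
    relImage (Relation.ReflTransGen T.rel) A.lang ∩ B.lang = ∅ := by
  have key : relImage (Relation.ReflTransGen T.rel) A.lang ⊆ Lk := by
    rintro v ⟨u, hu, hstar⟩
    induction hstar with
    | refl => exact hA hu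
    | tail _ hstep ih => exact hfix ▸ happly ⟨_, ih, hstep⟩
  ext w
  simp only [Set.mem_inter_iff, Set.mem_empty_iff_false, iff_false, not_and]
  intro hw hB
  have := hdisj ▸ Set.mem_inter (key hw) hB
  exact this
end
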